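/- Let 𝐐*_{MI} be the set of all latent distributions satisfying mean independence. Suppose P satisfies P{Z = z} > 0 for all z ∈ 𝒵 and 𝐐₀(P, 𝐐*_{MI}) ≠ ∅. Then Θ₀(P, 𝐐*_{MI}) equals the product over d ∈ 𝒟 of the closed intervals [max_{z∈𝒵}{β_{d|z} + y^L(1 − Σ_{y∈𝒴} p_{yd|z})}, min_{z∈𝒵}{β_{d|z} + y^U(1 − Σ_{y∈𝒴} p_{yd|z})}]. -/
import Mathlib


open Finset

/-- A probability mass function on a finite type. -/
structure ProbMass (α : Type) [Fintype α] where
  mass : α → ℝ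
  nonneg : ∀ a, 0 ≤ mass a
  total : ∑ a, mass a = 1

/-- Probability of an event under a probability mass function. -/
noncomputable def pr {α : Type} [Fintype α] (Q : ProbMass α) (A : Set α) : ℝ :=
  ∑ a, A.indicator Q.mass a

/-- Expectation of a real-valued function under a probability mass function. -/
noncomputable def expect {α : Type} [Fintype α] (Q : ProbMass α) (f : α → ℝ) : ℝ :=
  ∑ a, Q.mass a * f a

/-- The latent space: potential outcomes `(Y_d)_{d ∈ D}` taking values in the finite set
`𝒴 ⊂ ℝ`, potential treatments `(D_z)_{z ∈ Z}`, and the instrument `Z`. -/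
abbrev Latent (𝒴 : Finset ℝ) (D Z : Type) : Type := (D → ↥𝒴) × (Z → D) × Z

/-- The observed space: `(Y, D, Z)`. -/
abbrev Obs (𝒴 : Finset ℝ) (D Z : Type) : Type := ↥𝒴 × D × Z

variable {𝒴 : Finset ℝ} {D Z : Type} [Fintype D] [DecidableEq D] [Fintype Z] [DecidableEq Z]

/-- The map `T` sending `((y_d), (d_z), z)` to `(y_{d_z}, d_z, z)`. -/
def Tmap (ω : Latent 𝒴 D Z) : Obs 𝒴 D Z := (ω.1 (ω.2.1 ω.2.2), ω.2.1 ω.2.2, ω.2.2)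

/-- `Q` rationalizes `P`: `P = Q ∘ T⁻¹`. -/
def Rationalizes (Q : ProbMass (Latent 𝒴 D Z)) (P : ProbMass (Obs 𝒴 D Z)) : Prop :=
  ∀ o : Obs 𝒴 D Z, P.mass o = pr Q {ω | Tmap ω = o}

/-- Instrument exogeneity: `((Y_d), (D_z))` is independent of `Z` under `Q`. -/
def Exog (Q : ProbMass (Latent 𝒴 D Z)) : Prop :=
  ∀ (yd : D → ↥𝒴) (dz : Z → D) (z : Z),
    pr Q {ω | ω.1 = yd ∧ ω.2.1 = dz ∧ ω.2.2 = z}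
      = pr Q {ω | ω.1 = yd ∧ ω.2.1 = dz} * pr Q {ω | ω.2.2 = z}

/-- `zs` maximally encourages treatment `d` under `Q`:
`Q{D_{zs} ≠ d and D_{z'} = d for some z'} = 0`. -/
def MaxEnc (Q : ProbMass (Latent 𝒴 D Z)) (d : D) (zs : Z) : Prop :=
  pr Q {ω | ω.2.1 zs ≠ d ∧ ∃ z' : Z, ω.2.1 z' = d} = 0

/-- Generalized monotonicity. -/
def GenMono (Q : ProbMass (Latent 𝒴 D Z)) : Prop :=
  ∀ d : D, ∃ zs : Z, MaxEnc Q d zs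

/-- `θ(Q) = (E_Q[Y_d])_{d ∈ D}`, the vector of average potential outcomes. -/
noncomputable def theta (Q : ProbMass (Latent 𝒴 D Z)) : D → ℝ :=
  fun d => expect Q fun ω => (ω.1 d : ℝ)

/-- `𝐐₀(P, 𝐐)`: the set of `Q ∈ 𝐐` that rationalize `P`. -/
def Q0 (P : ProbMass (Obs 𝒴 D Z)) (QQ : Set (ProbMass (Latent 𝒴 D Z))) :
    Set (ProbMass (Latent 𝒴 D Z)) :=
  {Q | Q ∈ QQ ∧ Rationalizes Q P}

/-- `Θ₀(P, 𝐐)`: the identified set for `θ(Q)`. -/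
noncomputable def Theta0 (P : ProbMass (Obs 𝒴 D Z))
    (QQ : Set (ProbMass (Latent 𝒴 D Z))) : Set (D → ℝ) :=
  theta '' Q0 P QQ

/-- Unrestricted potential outcomes: if `Q ∈ 𝐐`, `Q'` is exogenous, and the potential
treatments have the same distribution under `Q'` as under `Q`, then `Q' ∈ 𝐐`. -/
def UnrestrictedPO (QQ : Set (ProbMass (Latent 𝒴 D Z))) : Prop :=
  ∀ Q ∈ QQ, ∀ Q' : ProbMass (Latent 𝒴 D Z), Exog Q' →
    (∀ dz : Z → D, pr Q' {ω | ω.2.1 = dz} = pr Q {ω | ω.2.1 = dz}) → Q' ∈ QQ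

/-- `P{Z = z}`. -/
noncomputable def prZ (P : ProbMass (Obs 𝒴 D Z)) (z : Z) : ℝ :=
  pr P {o | o.2.2 = z}

/-- `P{D = d ∣ Z = z}`. -/
noncomputable def condD (P : ProbMass (Obs 𝒴 D Z)) (d : D) (z : Z) : ℝ :=
  pr P {o | o.2.1 = d ∧ o.2.2 = z} / prZ P z

/-- `p_{yd|z} = P{Y = y, D = d ∣ Z = z}`. -/
noncomputable def pObs (P : ProbMass (Obs 𝒴 D Z)) (y : ℝ) (d : D) (z : Z) : ℝ :=
  pr P {o | (o.1 : ℝ) = y ∧ o.2.1 = d ∧ o.2.2 = z} / prZ P z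

/-- `β_{d|z} = E_P[Y · 1{D = d} ∣ Z = z]`. -/
noncomputable def betaObs (P : ProbMass (Obs 𝒴 D Z)) (d : D) (z : Z) : ℝ :=
  (expect P fun o => if o.2.1 = d ∧ o.2.2 = z then (o.1 : ℝ) else 0) / prZ P z

/-- Mean independence: `E_Q[Y_d ∣ Z = z] = E_Q[Y_d]` for all `d` and all `z` with
`Q{Z = z} > 0`. -/
def MeanIndep {𝒴 : Finset ℝ} {D Z : Type} [Fintype D] [DecidableEq D]
    [Fintype Z] [DecidableEq Z] (Q : ProbMass (Latent 𝒴 D Z)) : Prop :=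
  ∀ (d : D) (z : Z), 0 < pr Q {ω | ω.2.2 = z} →
    (expect Q fun ω => if ω.2.2 = z then (ω.1 d : ℝ) else 0) / pr Q {ω | ω.2.2 = z}
      = theta Q d

section Aux

lemma ite_inst_congr {α : Sort*} {p : Prop} {h1 h2 : Decidable p} {a b : α} :
    @ite α p h1 a b = @ite α p h2 a b := by
  cases Subsingleton.elim h1 h2; rfl

open Classical in
lemma pr_eq_sum' {α : Type} [Fintype α] (Q : ProbMass α) (A : Set α) :
    pr Q A = ∑ a, if a ∈ A then Q.mass a else 0 := by
  refine Finset.sum_congr rfl fun a _ => ?_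
  simp [Set.indicator_apply]

open Classical in
lemma pr_eq_expect' {α : Type} [Fintype α] (Q : ProbMass α) (A : Set α) :
    pr Q A = _root_.expect Q fun a => if a ∈ A then 1 else 0 := by
  rw [pr_eq_sum']; unfold _root_.expect
  refine Finset.sum_congr rfl fun a _ => ?_
  by_cases h : a ∈ A <;> simp [h]

lemma expect_rat {Q : ProbMass (Latent 𝒴 D Z)} {P : ProbMass (Obs 𝒴 D Z)}
    (h : Rationalizes Q P) (f : Obs 𝒴 D Z → ℝ) :
    _root_.expect P f = _root_.expect Q fun ω => f (Tmap ω) := by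
  classical
  unfold _root_.expect
  have h1 : ∀ o : Obs 𝒴 D Z,
      P.mass o = ∑ ω : Latent 𝒴 D Z, if Tmap ω = o then Q.mass ω else 0 := by
    intro o; rw [h o, pr_eq_sum']
    exact Finset.sum_congr rfl fun ω _ => ite_inst_congr
  calc ∑ o, P.mass o * f o
      = ∑ o, ∑ ω : Latent 𝒴 D Z, (if Tmap ω = o then Q.mass ω else 0) * f o := by
        refine Finset.sum_congr rfl fun o _ => ?_; rw [h1 o, Finset.sum_mul]
    _ = ∑ ω : Latent 𝒴 D Z, ∑ o, (if Tmap ω = o then Q.mass ω * f o else 0) := by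
        rw [Finset.sum_comm]
        exact Finset.sum_congr rfl fun ω _ => Finset.sum_congr rfl fun o _ => by
          rw [ite_mul, zero_mul]
    _ = ∑ ω : Latent 𝒴 D Z, Q.mass ω * f (Tmap ω) := by
        refine Finset.sum_congr rfl fun ω _ => ?_
        rw [Finset.sum_ite_eq]; simp

lemma pr_rat {Q : ProbMass (Latent 𝒴 D Z)} {P : ProbMass (Obs 𝒴 D Z)}
    (h : Rationalizes Q P) (A : Set (Obs 𝒴 D Z)) :
    pr P A = pr Q (Tmap ⁻¹' A) := by
  classical
  rw [pr_eq_expect', pr_eq_expect', expect_rat h]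
  unfold _root_.expect
  refine Finset.sum_congr rfl fun ω _ => ?_
  by_cases hω : Tmap ω ∈ A <;> simp [hω, Set.mem_preimage]

/-- `∑ u, P.mass (u, d, z)`. -/
noncomputable def prDZ (P : ProbMass (Obs 𝒴 D Z)) (d : D) (z : Z) : ℝ :=
  ∑ u : ↥𝒴, P.mass (u, d, z)

lemma prDZ_nonneg (P : ProbMass (Obs 𝒴 D Z)) (d : D) (z : Z) : 0 ≤ prDZ P d z :=
  Finset.sum_nonneg fun _ _ => P.nonneg _

lemma prZ_eq (P : ProbMass (Obs 𝒴 D Z)) (z : Z) : prZ P z = ∑ d, prDZ P d z := by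
  classical
  calc prZ P z = ∑ a : Obs 𝒴 D Z, if a.2.2 = z then P.mass a else 0 := by
        rw [prZ, pr_eq_sum']
        exact Finset.sum_congr rfl fun a _ => ite_inst_congr
    _ = ∑ u : ↥𝒴, ∑ d : D, ∑ z' : Z, if z' = z then P.mass (u, d, z') else 0 := by
        rw [Fintype.sum_prod_type]
        exact Finset.sum_congr rfl fun u _ => by rw [Fintype.sum_prod_type]
    _ = ∑ u : ↥𝒴, ∑ d : D, P.mass (u, d, z) := by simp
    _ = ∑ d, prDZ P d z := Finset.sum_comm

lemma sum_prZ (P : ProbMass (Obs 𝒴 D Z)) : ∑ z, prZ P z = 1 := by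
  classical
  calc ∑ z, prZ P z
      = ∑ z, ∑ a : Obs 𝒴 D Z, if a.2.2 = z then P.mass a else 0 := by
        refine Finset.sum_congr rfl fun z _ => ?_
        rw [prZ, pr_eq_sum']
        exact Finset.sum_congr rfl fun a _ => ite_inst_congr
    _ = ∑ a : Obs 𝒴 D Z, ∑ z, if a.2.2 = z then P.mass a else 0 := Finset.sum_comm
    _ = 1 := by simp [P.total]

lemma sum_ite_dz (P : ProbMass (Obs 𝒴 D Z)) (d : D) (z : Z) :
    (∑ a : Obs 𝒴 D Z, if a.2.1 = d ∧ a.2.2 = z then P.mass a else 0) = prDZ P d z := by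
  classical
  rw [Fintype.sum_prod_type]
  refine Finset.sum_congr rfl fun u _ => ?_
  rw [Fintype.sum_prod_type]
  have : ∀ d' : D, (∑ z', if d' = d ∧ z' = z then P.mass (u, d', z') else 0)
      = if d' = d then P.mass (u, d', z) else 0 := by
    intro d'; by_cases h : d' = d <;> simp [h]
  simp [this]

lemma prDZ_eq (P : ProbMass (Obs 𝒴 D Z)) (d : D) (z : Z) :
    pr P {o : Obs 𝒴 D Z | o.2.1 = d ∧ o.2.2 = z} = prDZ P d z := by
  classical
  rw [pr_eq_sum', ← sum_ite_dz P d z]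
  exact Finset.sum_congr rfl fun a _ => ite_inst_congr

lemma prDZ_le (P : ProbMass (Obs 𝒴 D Z)) (d : D) (z : Z) : prDZ P d z ≤ prZ P z := by
  rw [prZ_eq]
  exact Finset.single_le_sum (fun d' _ => prDZ_nonneg P d' z) (Finset.mem_univ d)

lemma betaObs_mul (P : ProbMass (Obs 𝒴 D Z)) (d : D) (z : Z) (hz : prZ P z ≠ 0) :
    betaObs P d z * prZ P z = ∑ u : ↥𝒴, P.mass (u, d, z) * (u : ℝ) := by
  classical
  rw [betaObs, div_mul_cancel₀ _ hz]
  unfold _root_.expect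
  rw [Fintype.sum_prod_type]
  refine Finset.sum_congr rfl fun u _ => ?_
  rw [Fintype.sum_prod_type]
  have : ∀ d' : D, (∑ z', if d' = d ∧ z' = z then P.mass (u, d', z') * (u : ℝ) else 0)
      = if d' = d then P.mass (u, d', z) * (u : ℝ) else 0 := by
    intro d'; by_cases h : d' = d <;> simp [h]
  simp only [mul_ite, mul_zero, this]
  simp

lemma sum_pObs (P : ProbMass (Obs 𝒴 D Z)) (d : D) (z : Z) :
    ∑ y ∈ 𝒴, pObs P y d z = prDZ P d z / prZ P z := by
  classical
  unfold pObs
  rw [← Finset.sum_div]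
  congr 1
  calc ∑ y ∈ 𝒴, pr P {o : Obs 𝒴 D Z | (o.1 : ℝ) = y ∧ o.2.1 = d ∧ o.2.2 = z}
      = ∑ y ∈ 𝒴, ∑ a : Obs 𝒴 D Z,
          if (a.1 : ℝ) = y ∧ a.2.1 = d ∧ a.2.2 = z then P.mass a else 0 := by
        refine Finset.sum_congr rfl fun y _ => ?_
        rw [pr_eq_sum']
        exact Finset.sum_congr rfl fun a _ => ite_inst_congr
    _ = ∑ a : Obs 𝒴 D Z, ∑ y ∈ 𝒴,
          if (a.1 : ℝ) = y ∧ a.2.1 = d ∧ a.2.2 = z then P.mass a else 0 := Finset.sum_comm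
    _ = ∑ a : Obs 𝒴 D Z, if a.2.1 = d ∧ a.2.2 = z then P.mass a else 0 := by
        refine Finset.sum_congr rfl fun a _ => ?_
        by_cases hd : a.2.1 = d
        · by_cases hz2 : a.2.2 = z
          · simp [hd, hz2, Finset.sum_ite_eq, a.1.2]
          · simp [hz2]
        · simp [hd]
    _ = prDZ P d z := sum_ite_dz P d z

lemma expect_add' {α : Type} [Fintype α] (Q : ProbMass α) (f g : α → ℝ) :
    _root_.expect Q (fun a => f a + g a) = _root_.expect Q f + _root_.expect Q g := by
  simp [_root_.expect, mul_add, Finset.sum_add_distrib]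

lemma expect_zdec (Q : ProbMass (Latent 𝒴 D Z)) (g : Latent 𝒴 D Z → ℝ) :
    _root_.expect Q g = ∑ z, _root_.expect Q fun ω => if ω.2.2 = z then g ω else 0 := by
  classical
  unfold _root_.expect
  rw [Finset.sum_comm]
  refine Finset.sum_congr rfl fun ω _ => ?_
  rw [← Finset.mul_sum]
  simp [Finset.sum_ite_eq]

end Aux
section Constr

variable (P : ProbMass (Obs 𝒴 D Z)) (ν : D → Z → ↥𝒴 → ℝ)

lemma const_sum [Nontrivial Z] (z : Z) (G : (Z → D) → ℝ) :
    ∑ dz : Z → D, (if ∀ z', dz z' = dz z then (1:ℝ) else 0) * G dz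
      = ∑ d : D, G (Function.const Z d) := by
  classical
  have key : ∀ dz : Z → D, (if ∀ z', dz z' = dz z then (1:ℝ) else 0) * G dz
      = ∑ d, if dz = Function.const Z d then G dz else 0 := by
    intro dz
    by_cases h : ∀ z', dz z' = dz z
    · have hconst : dz = Function.const Z (dz z) := funext h
      rw [if_pos h, one_mul, Finset.sum_eq_single (dz z)]
      · rw [if_pos hconst]
      · intro d _ hd
        rw [if_neg]
        intro hc
        have h' : dz z = d := by simpa using congrFun hc z
        exact hd h'.symm
      · simp
    · rw [if_neg h, zero_mul]
      symm
      apply Finset.sum_eq_zero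
      intro d _
      rw [if_neg]
      intro hc
      exact h fun z' => by simp [hc]
  simp only [key]
  rw [Finset.sum_comm]
  refine Finset.sum_congr rfl fun d _ => ?_
  have := Finset.sum_ite_eq' (Finset.univ : Finset (Z → D)) (Function.const Z d) G
  simpa using this

lemma sum_pi_prod (h : D → ↥𝒴 → ℝ) :
    ∑ yd : D → ↥𝒴, ∏ d', h d' (yd d') = ∏ d', ∑ u, h d' u := by
  classical
  rw [show (Finset.univ : Finset (D → ↥𝒴)) = Fintype.piFinset fun _ => Finset.univ by
    rw [Fintype.piFinset_univ]]
  exact Finset.sum_prod_piFinset Finset.univ h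

/-- The constructed latent mass. -/
noncomputable def mkMass (ω : Latent 𝒴 D Z) : ℝ :=
  (if ∀ z', ω.2.1 z' = ω.2.1 ω.2.2 then (1:ℝ) else 0) *
    ∏ d', if d' = ω.2.1 ω.2.2 then P.mass (ω.1 d', d', ω.2.2) else ν d' ω.2.2 (ω.1 d')

lemma mkMass_nonneg (hν : ∀ d z u, 0 ≤ ν d z u) (ω : Latent 𝒴 D Z) :
    0 ≤ mkMass P ν ω := by
  unfold mkMass
  apply mul_nonneg
  · split <;> norm_num
  · refine Finset.prod_nonneg fun d' _ => ?_
    split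
    · exact P.nonneg _
    · exact hν _ _ _

lemma mkMass_sum [Nontrivial Z] (f : (D → ↥𝒴) → (Z → D) → Z → ℝ) :
    ∑ ω : Latent 𝒴 D Z, mkMass P ν ω * f ω.1 ω.2.1 ω.2.2
      = ∑ z, ∑ d, ∑ yd : D → ↥𝒴,
          (∏ d', if d' = d then P.mass (yd d', d', z) else ν d' z (yd d'))
            * f yd (Function.const Z d) z := by
  classical
  have step : ∀ yd : D → ↥𝒴,
      (∑ dz : Z → D, ∑ z : Z, mkMass P ν (yd, dz, z) * f yd dz z)
      = ∑ z : Z, ∑ d : D,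
          (∏ d', if d' = d then P.mass (yd d', d', z) else ν d' z (yd d'))
            * f yd (Function.const Z d) z := by
    intro yd
    rw [Finset.sum_comm]
    refine Finset.sum_congr rfl fun z _ => ?_
    calc ∑ dz : Z → D, mkMass P ν (yd, dz, z) * f yd dz z
        = ∑ dz : Z → D, (if ∀ z', dz z' = dz z then (1:ℝ) else 0) *
            ((∏ d', if d' = dz z then P.mass (yd d', d', z) else ν d' z (yd d'))
              * f yd dz z) := by
          refine Finset.sum_congr rfl fun dz _ => ?_
          show mkMass P ν (yd, dz, z) * f yd dz z = _
          unfold mkMass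
          ring
      _ = ∑ d, (∏ d', if d' = (Function.const Z d) z then P.mass (yd d', d', z)
              else ν d' z (yd d')) * f yd (Function.const Z d) z :=
          const_sum z _
      _ = ∑ d, (∏ d', if d' = d then P.mass (yd d', d', z) else ν d' z (yd d'))
            * f yd (Function.const Z d) z := rfl
  calc ∑ ω : Latent 𝒴 D Z, mkMass P ν ω * f ω.1 ω.2.1 ω.2.2
      = ∑ yd : D → ↥𝒴, ∑ dz : Z → D, ∑ z : Z, mkMass P ν (yd, dz, z) * f yd dz z := by
        rw [Fintype.sum_prod_type]
        exact Finset.sum_congr rfl fun yd _ => by rw [Fintype.sum_prod_type]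
    _ = ∑ yd : D → ↥𝒴, ∑ z : Z, ∑ d : D,
          (∏ d', if d' = d then P.mass (yd d', d', z) else ν d' z (yd d'))
            * f yd (Function.const Z d) z := Finset.sum_congr rfl fun yd _ => step yd
    _ = _ := by
        rw [Finset.sum_comm]
        exact Finset.sum_congr rfl fun z _ => Finset.sum_comm

lemma innerSumEval (z : Z) (d : D) (c : ↥𝒴 → ℝ) (d₁ : D) :
    ∑ yd : D → ↥𝒴,
        (∏ d', if d' = d then P.mass (yd d', d', z) else ν d' z (yd d')) * c (yd d₁)
      = ∏ d', ∑ u : ↥𝒴,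
          (if d' = d then P.mass (u, d', z) else ν d' z u) * (if d' = d₁ then c u else 1) := by
  classical
  rw [← sum_pi_prod]
  refine Finset.sum_congr rfl fun yd _ => ?_
  rw [Finset.prod_mul_distrib]
  congr 1
  rw [Finset.prod_ite_eq' Finset.univ d₁ fun x => c (yd x)]
  simp

lemma prod_single_ite (a : D) (X : ℝ) :
    (∏ d' : D, if d' = a then X else 1) = X := by
  classical
  rw [Finset.prod_ite_eq' Finset.univ a fun _ => X]; simp

lemma prod_pair_ite {a b : D} (hab : a ≠ b) (X Y : ℝ) :
    (∏ d' : D, if d' = a then X else if d' = b then Y else 1) = X * Y := by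
  classical
  have key : ∀ d' : D, (if d' = a then X else if d' = b then Y else 1)
      = (if d' = a then X else 1) * (if d' = b then Y else 1) := by
    intro d'
    by_cases h1 : d' = a
    · have h2 : d' ≠ b := fun h => hab (h1 ▸ h ▸ rfl)
      simp [h1, h2, hab]
    · by_cases h2 : d' = b <;> simp [h1, h2, Ne.symm hab]
  rw [Finset.prod_congr rfl fun d' _ => key d', Finset.prod_mul_distrib,
    prod_single_ite, prod_single_ite]

end Constr
section Subhelp

lemma sum_subtype_ite {𝒴 : Finset ℝ} (c : ℝ) (hc : c ∈ 𝒴) (w : ℝ) :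
    ∑ u : ↥𝒴, (if (u : ℝ) = c then w else 0) = w := by
  classical
  rw [Finset.sum_eq_single (⟨c, hc⟩ : ↥𝒴)]
  · simp
  · intro u _ hu
    rw [if_neg]
    exact fun h => hu (Subtype.ext h)
  · simp

lemma sum_subtype_ite_mul {𝒴 : Finset ℝ} (c : ℝ) (hc : c ∈ 𝒴) (w : ℝ) :
    ∑ u : ↥𝒴, (if (u : ℝ) = c then w else 0) * (u : ℝ) = w * c := by
  classical
  rw [Finset.sum_eq_single (⟨c, hc⟩ : ↥𝒴)]
  · simp
  · intro u _ hu
    rw [if_neg, zero_mul]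
    exact fun h => hu (Subtype.ext h)
  · simp

end Subhelp
/-- Lemma 3.2, Robins–Manski bounds: the identified set under mean
independence is the product over `d` of the intervals
`[max_z {β_{d|z} + y^L(1 − Σ_y p_{yd|z})}, min_z {β_{d|z} + y^U(1 − Σ_y p_{yd|z})}]`. -/
theorem identified_set_mean_independence
    (𝒴 : Finset ℝ) (h𝒴 : 2 ≤ 𝒴.card)
    (D Z : Type) [Fintype D] [DecidableEq D] [Nontrivial D]
    [Fintype Z] [DecidableEq Z] [Nontrivial Z]
    (P : ProbMass (Obs 𝒴 D Z))
    (hP : ∀ z : Z, 0 < prZ P z)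
    (hne : (Q0 P {Q : ProbMass (Latent 𝒴 D Z) | MeanIndep Q}).Nonempty) :
    Theta0 P {Q : ProbMass (Latent 𝒴 D Z) | MeanIndep Q} = Set.univ.pi (fun d : D =>
      Set.Icc
        (Finset.univ.sup' Finset.univ_nonempty fun z : Z =>
          betaObs P d z + 𝒴.min' (Finset.card_pos.mp (by omega)) * (1 - ∑ y ∈ 𝒴, pObs P y d z))
        (Finset.univ.inf' Finset.univ_nonempty fun z : Z =>
          betaObs P d z + 𝒴.max' (Finset.card_pos.mp (by omega)) * (1 - ∑ y ∈ 𝒴, pObs P y d z))) := by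
  classical
  have hcard1 : 0 < 𝒴.card := by omega
  ext τ
  simp only [Theta0, Set.mem_image, Q0, Set.mem_setOf_eq, Set.mem_pi, Set.mem_univ,
    Set.mem_Icc, true_implies]
  constructor
  · rintro ⟨Q, ⟨hMI, hR⟩, rfl⟩
    intro d
    constructor
    · apply Finset.sup'_le
      intro z _
      -- lower bound at z
      have hz := hP z
      have hQz : pr Q {ω : Latent 𝒴 D Z | ω.2.2 = z} = prZ P z :=
        (pr_rat hR {o : Obs 𝒴 D Z | o.2.2 = z}).symm
      have hMz := hMI d z (by rw [hQz]; exact hz)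
      set Sbad : Set (Latent 𝒴 D Z) := {ω | ω.2.2 = z ∧ ω.2.1 z ≠ d} with hSbaddef
      have hsplit : (fun ω : Latent 𝒴 D Z => if ω.2.2 = z then (ω.1 d : ℝ) else 0)
          = fun ω => (if (Tmap ω).2.1 = d ∧ (Tmap ω).2.2 = z then ((Tmap ω).1 : ℝ) else 0)
              + (if ω ∈ Sbad then (ω.1 d : ℝ) else 0) := by
        funext ω
        obtain ⟨yd, dz, z0⟩ := ω
        show (if z0 = z then (yd d : ℝ) else 0)
            = (if dz z0 = d ∧ z0 = z then (yd (dz z0) : ℝ) else 0)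
              + (if z0 = z ∧ dz z ≠ d then (yd d : ℝ) else 0)
        by_cases hz0 : z0 = z
        · subst hz0
          by_cases hd : dz z0 = d <;> simp [hd]
        · simp [hz0]
      have hdecomp : (_root_.expect Q fun ω => if ω.2.2 = z then (ω.1 d : ℝ) else 0)
          = betaObs P d z * prZ P z
            + _root_.expect Q (fun ω => if ω ∈ Sbad then (ω.1 d : ℝ) else 0) := by
        rw [hsplit, expect_add']
        congr 1
        rw [← expect_rat hR (fun o => if o.2.1 = d ∧ o.2.2 = z then (o.1 : ℝ) else 0)]
        rw [betaObs, div_mul_cancel₀ _ (ne_of_gt hz)]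
      have hbad : pr Q Sbad = prZ P z - prDZ P d z := by
        have h1 : Sbad = Tmap ⁻¹' {o : Obs 𝒴 D Z | o.2.2 = z ∧ o.2.1 ≠ d} := by
          ext ⟨yd, dz, z0⟩
          show (z0 = z ∧ dz z ≠ d) ↔ (z0 = z ∧ dz z0 ≠ d)
          constructor <;> rintro ⟨h1, h2⟩ <;> subst h1 <;> exact ⟨rfl, h2⟩
        rw [h1, ← pr_rat hR]
        calc pr P {o : Obs 𝒴 D Z | o.2.2 = z ∧ o.2.1 ≠ d}
            = ∑ a : Obs 𝒴 D Z, ((if a.2.2 = z then P.mass a else 0)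
                - (if a.2.1 = d ∧ a.2.2 = z then P.mass a else 0)) := by
              rw [pr_eq_sum']
              refine Finset.sum_congr rfl fun a _ => ?_
              by_cases haz : a.2.2 = z
              · by_cases had : a.2.1 = d <;> simp [haz, had, Set.mem_setOf_eq]
              · simp [haz, Set.mem_setOf_eq]
          _ = prZ P z - prDZ P d z := by
              rw [Finset.sum_sub_distrib, sum_ite_dz P d z]
              congr 1
              rw [prZ, pr_eq_sum']
              exact Finset.sum_congr rfl fun a _ => ite_inst_congr
      have hEbad_low : 𝒴.min' (Finset.card_pos.mp hcard1) * (prZ P z - prDZ P d z)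
          ≤ _root_.expect Q fun ω => if ω ∈ Sbad then (ω.1 d : ℝ) else 0 := by
        have heq : 𝒴.min' (Finset.card_pos.mp hcard1) * (prZ P z - prDZ P d z)
            = ∑ ω : Latent 𝒴 D Z, Q.mass ω *
                (if ω ∈ Sbad then 𝒴.min' (Finset.card_pos.mp hcard1) else 0) := by
          rw [← hbad, pr_eq_sum', Finset.mul_sum]
          refine Finset.sum_congr rfl fun ω _ => ?_
          by_cases h : ω ∈ Sbad <;> simp [h] <;> ring
        rw [heq]
        refine Finset.sum_le_sum fun ω _ => ?_
        refine mul_le_mul_of_nonneg_left ?_ (Q.nonneg ω)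
        by_cases h : ω ∈ Sbad
        · simp only [h, if_true]
          exact Finset.min'_le _ _ (ω.1 d).2
        · simp [h]
      have hEbad_high : (_root_.expect Q fun ω => if ω ∈ Sbad then (ω.1 d : ℝ) else 0)
          ≤ 𝒴.max' (Finset.card_pos.mp hcard1) * (prZ P z - prDZ P d z) := by
        have heq : 𝒴.max' (Finset.card_pos.mp hcard1) * (prZ P z - prDZ P d z)
            = ∑ ω : Latent 𝒴 D Z, Q.mass ω *
                (if ω ∈ Sbad then 𝒴.max' (Finset.card_pos.mp hcard1) else 0) := by
          rw [← hbad, pr_eq_sum', Finset.mul_sum]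
          refine Finset.sum_congr rfl fun ω _ => ?_
          by_cases h : ω ∈ Sbad <;> simp [h] <;> ring
        rw [heq]
        refine Finset.sum_le_sum fun ω _ => ?_
        refine mul_le_mul_of_nonneg_left ?_ (Q.nonneg ω)
        by_cases h : ω ∈ Sbad
        · simp only [h, if_true]
          exact Finset.le_max' _ _ (ω.1 d).2
        · simp [h]
      rw [hQz, hdecomp] at hMz
      rw [← hMz]
      have hsppz : (∑ y ∈ 𝒴, pObs P y d z) * prZ P z = prDZ P d z := by
        rw [sum_pObs]
        field_simp
      rw [le_div_iff₀ hz]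
      have hexp : (betaObs P d z + 𝒴.min' (Finset.card_pos.mp hcard1)
            * (1 - ∑ y ∈ 𝒴, pObs P y d z)) * prZ P z
          = betaObs P d z * prZ P z
            + 𝒴.min' (Finset.card_pos.mp hcard1) * (prZ P z - prDZ P d z) := by
        linear_combination (-(𝒴.min' (Finset.card_pos.mp hcard1))) * hsppz
      rw [hexp]
      linarith [hEbad_low]
    · apply Finset.le_inf'
      intro z _
      have hz := hP z
      have hQz : pr Q {ω : Latent 𝒴 D Z | ω.2.2 = z} = prZ P z :=
        (pr_rat hR {o : Obs 𝒴 D Z | o.2.2 = z}).symm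
      have hMz := hMI d z (by rw [hQz]; exact hz)
      set Sbad : Set (Latent 𝒴 D Z) := {ω | ω.2.2 = z ∧ ω.2.1 z ≠ d} with hSbaddef
      have hsplit : (fun ω : Latent 𝒴 D Z => if ω.2.2 = z then (ω.1 d : ℝ) else 0)
          = fun ω => (if (Tmap ω).2.1 = d ∧ (Tmap ω).2.2 = z then ((Tmap ω).1 : ℝ) else 0)
              + (if ω ∈ Sbad then (ω.1 d : ℝ) else 0) := by
        funext ω
        obtain ⟨yd, dz, z0⟩ := ω
        show (if z0 = z then (yd d : ℝ) else 0)
            = (if dz z0 = d ∧ z0 = z then (yd (dz z0) : ℝ) else 0)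
              + (if z0 = z ∧ dz z ≠ d then (yd d : ℝ) else 0)
        by_cases hz0 : z0 = z
        · subst hz0
          by_cases hd : dz z0 = d <;> simp [hd]
        · simp [hz0]
      have hdecomp : (_root_.expect Q fun ω => if ω.2.2 = z then (ω.1 d : ℝ) else 0)
          = betaObs P d z * prZ P z
            + _root_.expect Q (fun ω => if ω ∈ Sbad then (ω.1 d : ℝ) else 0) := by
        rw [hsplit, expect_add']
        congr 1
        rw [← expect_rat hR (fun o => if o.2.1 = d ∧ o.2.2 = z then (o.1 : ℝ) else 0)]
        rw [betaObs, div_mul_cancel₀ _ (ne_of_gt hz)]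
      have hbad : pr Q Sbad = prZ P z - prDZ P d z := by
        have h1 : Sbad = Tmap ⁻¹' {o : Obs 𝒴 D Z | o.2.2 = z ∧ o.2.1 ≠ d} := by
          ext ⟨yd, dz, z0⟩
          show (z0 = z ∧ dz z ≠ d) ↔ (z0 = z ∧ dz z0 ≠ d)
          constructor <;> rintro ⟨h1, h2⟩ <;> subst h1 <;> exact ⟨rfl, h2⟩
        rw [h1, ← pr_rat hR]
        calc pr P {o : Obs 𝒴 D Z | o.2.2 = z ∧ o.2.1 ≠ d}
            = ∑ a : Obs 𝒴 D Z, ((if a.2.2 = z then P.mass a else 0)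
                - (if a.2.1 = d ∧ a.2.2 = z then P.mass a else 0)) := by
              rw [pr_eq_sum']
              refine Finset.sum_congr rfl fun a _ => ?_
              by_cases haz : a.2.2 = z
              · by_cases had : a.2.1 = d <;> simp [haz, had, Set.mem_setOf_eq]
              · simp [haz, Set.mem_setOf_eq]
          _ = prZ P z - prDZ P d z := by
              rw [Finset.sum_sub_distrib, sum_ite_dz P d z]
              congr 1
              rw [prZ, pr_eq_sum']
              exact Finset.sum_congr rfl fun a _ => ite_inst_congr
      have hEbad_high : (_root_.expect Q fun ω => if ω ∈ Sbad then (ω.1 d : ℝ) else 0)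
          ≤ 𝒴.max' (Finset.card_pos.mp hcard1) * (prZ P z - prDZ P d z) := by
        have heq : 𝒴.max' (Finset.card_pos.mp hcard1) * (prZ P z - prDZ P d z)
            = ∑ ω : Latent 𝒴 D Z, Q.mass ω *
                (if ω ∈ Sbad then 𝒴.max' (Finset.card_pos.mp hcard1) else 0) := by
          rw [← hbad, pr_eq_sum', Finset.mul_sum]
          refine Finset.sum_congr rfl fun ω _ => ?_
          by_cases h : ω ∈ Sbad <;> simp [h] <;> ring
        rw [heq]
        refine Finset.sum_le_sum fun ω _ => ?_
        refine mul_le_mul_of_nonneg_left ?_ (Q.nonneg ω)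
        by_cases h : ω ∈ Sbad
        · simp only [h, if_true]
          exact Finset.le_max' _ _ (ω.1 d).2
        · simp [h]
      rw [hQz, hdecomp] at hMz
      rw [← hMz]
      have hsppz : (∑ y ∈ 𝒴, pObs P y d z) * prZ P z = prDZ P d z := by
        rw [sum_pObs]
        field_simp
      rw [div_le_iff₀ hz]
      have hexp : (betaObs P d z + 𝒴.max' (Finset.card_pos.mp hcard1)
            * (1 - ∑ y ∈ 𝒴, pObs P y d z)) * prZ P z
          = betaObs P d z * prZ P z
            + 𝒴.max' (Finset.card_pos.mp hcard1) * (prZ P z - prDZ P d z) := by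
        linear_combination (-(𝒴.max' (Finset.card_pos.mp hcard1))) * hsppz
      rw [hexp]
      linarith [hEbad_high]
  · intro ht
    have hyLmem := 𝒴.min'_mem (Finset.card_pos.mp hcard1)
    have hyUmem := 𝒴.max'_mem (Finset.card_pos.mp hcard1)
    set yL := 𝒴.min' (Finset.card_pos.mp hcard1) with hyLdef
    set yU := 𝒴.max' (Finset.card_pos.mp hcard1) with hyUdef
    have hyLU : yL < yU := Finset.min'_lt_max'_of_card 𝒴 (by omega)
    obtain ⟨m, hm⟩ : ∃ m : D → Z → ℝ, ∀ d z, yL ≤ m d z ∧ m d z ≤ yU ∧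
        betaObs P d z * prZ P z + (prZ P z - prDZ P d z) * m d z = prZ P z * τ d := by
      refine ⟨fun d z => if (∑ y ∈ 𝒴, pObs P y d z) < 1
        then (τ d - betaObs P d z) / (1 - ∑ y ∈ 𝒴, pObs P y d z) else yL, fun d z => ?_⟩
      have hLz : betaObs P d z + yL * (1 - ∑ y ∈ 𝒴, pObs P y d z) ≤ τ d :=
        le_trans (Finset.le_sup'
          (fun z => betaObs P d z + yL * (1 - ∑ y ∈ 𝒴, pObs P y d z))
          (Finset.mem_univ z)) (ht d).1
      have hUz : τ d ≤ betaObs P d z + yU * (1 - ∑ y ∈ 𝒴, pObs P y d z) :=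
        le_trans (ht d).2 (Finset.inf'_le
          (fun z => betaObs P d z + yU * (1 - ∑ y ∈ 𝒴, pObs P y d z))
          (Finset.mem_univ z))
      have hspv : (∑ y ∈ 𝒴, pObs P y d z) = prDZ P d z / prZ P z := sum_pObs P d z
      have hsple : (∑ y ∈ 𝒴, pObs P y d z) ≤ 1 := by
        rw [hspv]
        exact (div_le_one (hP z)).mpr (prDZ_le P d z)
      have hdiff : prZ P z - prDZ P d z = prZ P z * (1 - ∑ y ∈ 𝒴, pObs P y d z) := by
        rw [hspv, mul_sub, mul_one, mul_comm (prZ P z) (prDZ P d z / prZ P z),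
          div_mul_cancel₀ _ (ne_of_gt (hP z))]
      beta_reduce
      by_cases hc : (∑ y ∈ 𝒴, pObs P y d z) < 1
      · rw [if_pos hc]
        refine ⟨?_, ?_, ?_⟩
        · rw [le_div_iff₀ (by linarith)]
          linarith
        · rw [div_le_iff₀ (by linarith)]
          linarith
        · rw [hdiff]
          have hne1 : (1 : ℝ) - ∑ y ∈ 𝒴, pObs P y d z ≠ 0 := ne_of_gt (by linarith)
          field_simp
          ring
      · rw [if_neg hc]
        have hsp1 : (∑ y ∈ 𝒴, pObs P y d z) = 1 := le_antisymm hsple (not_lt.mp hc)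
        have hτ : τ d = betaObs P d z := by
          rw [hsp1] at hLz hUz
          simp at hLz hUz
          linarith
        have hdiff0 : prZ P z - prDZ P d z = 0 := by
          rw [hdiff, hsp1]
          ring
        exact ⟨le_refl _, le_of_lt hyLU, by rw [hdiff0, hτ]; ring⟩
    obtain ⟨ν, hν0, hν1, hνm⟩ : ∃ ν : D → Z → ↥𝒴 → ℝ, (∀ d z u, 0 ≤ ν d z u) ∧
        (∀ d z, ∑ u : ↥𝒴, ν d z u = 1) ∧
        (∀ d z, ∑ u : ↥𝒴, ν d z u * (u : ℝ) = m d z) := by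
      refine ⟨fun d z u => (if (u : ℝ) = yU then (m d z - yL) / (yU - yL) else 0)
          + (if (u : ℝ) = yL then 1 - (m d z - yL) / (yU - yL) else 0), ?_, ?_, ?_⟩
      · intro d z u
        have h1 : 0 ≤ (m d z - yL) / (yU - yL) :=
          div_nonneg (by linarith [(hm d z).1]) (by linarith)
        have h2 : (m d z - yL) / (yU - yL) ≤ 1 := by
          rw [div_le_one (by linarith)]
          linarith [(hm d z).2.1]
        dsimp only
        split_ifs <;> linarith
      · intro d z
        dsimp only
        rw [Finset.sum_add_distrib, sum_subtype_ite yU hyUmem, sum_subtype_ite yL hyLmem]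
        ring
      · intro d z
        dsimp only
        have hdistrib : ∀ u : ↥𝒴,
            ((if (u : ℝ) = yU then (m d z - yL) / (yU - yL) else 0)
              + (if (u : ℝ) = yL then 1 - (m d z - yL) / (yU - yL) else 0)) * (u : ℝ)
            = (if (u : ℝ) = yU then (m d z - yL) / (yU - yL) else 0) * (u : ℝ)
              + (if (u : ℝ) = yL then 1 - (m d z - yL) / (yU - yL) else 0) * (u : ℝ) :=
          fun u => add_mul _ _ _
        rw [Finset.sum_congr rfl fun u _ => hdistrib u, Finset.sum_add_distrib,
          sum_subtype_ite_mul yU hyUmem, sum_subtype_ite_mul yL hyLmem]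
        have hlamm : (m d z - yL) / (yU - yL) * (yU - yL) = m d z - yL :=
          div_mul_cancel₀ _ (by linarith)
        linear_combination hlamm
    -- the constructed latent distribution
    have htotal : ∑ ω : Latent 𝒴 D Z, mkMass P ν ω = 1 := by
      have h1 : ∀ z d, (∑ yd : D → ↥𝒴,
          ∏ d', if d' = d then P.mass (yd d', d', z) else ν d' z (yd d'))
          = prDZ P d z := by
        intro z d
        calc (∑ yd : D → ↥𝒴,
            ∏ d', if d' = d then P.mass (yd d', d', z) else ν d' z (yd d'))
            = ∏ d', ∑ u : ↥𝒴, if d' = d then P.mass (u, d', z) else ν d' z u :=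
              sum_pi_prod fun d' u => if d' = d then P.mass (u, d', z) else ν d' z u
          _ = prDZ P d z := by
              have h2 : ∀ d' : D, (∑ u : ↥𝒴, if d' = d then P.mass (u, d', z) else ν d' z u)
                  = if d' = d then prDZ P d z else 1 := by
                intro d'
                by_cases h : d' = d
                · subst h
                  simp only [if_pos rfl]
                  rfl
                · simp only [if_neg h]
                  exact hν1 d' z
              rw [Finset.prod_congr rfl fun d' _ => h2 d', prod_single_ite]
      have h0 := mkMass_sum P ν (fun _ _ _ => (1 : ℝ))
      simp only [mul_one] at h0
      rw [h0, Finset.sum_congr rfl fun z _ => Finset.sum_congr rfl fun d _ => h1 z d,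
        Finset.sum_congr rfl fun z _ => (prZ_eq P z).symm, sum_prZ]
    set Q : ProbMass (Latent 𝒴 D Z) := ⟨mkMass P ν, mkMass_nonneg P ν hν0, htotal⟩ with hQdef
    have hQmass : ∀ ω : Latent 𝒴 D Z, Q.mass ω = mkMass P ν ω := fun ω => by rw [hQdef]
    have hR : Rationalizes Q P := by
      rintro ⟨y₁, d₁, z₁⟩
      have hmain : pr Q {ω : Latent 𝒴 D Z | Tmap ω = (y₁, d₁, z₁)} = P.mass (y₁, d₁, z₁) := by
        calc pr Q {ω : Latent 𝒴 D Z | Tmap ω = (y₁, d₁, z₁)}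
            = ∑ ω : Latent 𝒴 D Z, Q.mass ω * (if Tmap ω = (y₁, d₁, z₁) then 1 else 0) := by
              rw [pr_eq_sum']
              refine Finset.sum_congr rfl fun ω _ => ?_
              by_cases h : Tmap ω = (y₁, d₁, z₁) <;> simp [h, Set.mem_setOf_eq]
          _ = ∑ ω : Latent 𝒴 D Z, mkMass P ν ω * (if Tmap ω = (y₁, d₁, z₁) then 1 else 0) :=
              Finset.sum_congr rfl fun ω _ => by rw [hQmass]
          _ = P.mass (y₁, d₁, z₁) := by
              have h0 := mkMass_sum P ν
                (fun yd dz z => if Tmap (yd, dz, z) = (y₁, d₁, z₁) then (1 : ℝ) else 0)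
              simp only [Prod.mk.eta] at h0
              rw [h0]
              have houter : ∀ z ∈ (Finset.univ : Finset Z), z ≠ z₁ →
                  (∑ d, ∑ yd : D → ↥𝒴,
                    (∏ d', if d' = d then P.mass (yd d', d', z) else ν d' z (yd d'))
                      * (if Tmap (yd, Function.const Z d, z) = (y₁, d₁, z₁) then (1:ℝ) else 0)) = 0 := by
                intro z _ hzz
                apply Finset.sum_eq_zero; intro d _
                apply Finset.sum_eq_zero; intro yd _
                have hTm : Tmap (yd, Function.const Z d, z) = (yd d, d, z) := rfl
                simp [hTm, Prod.ext_iff, hzz]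
              rw [Finset.sum_eq_single_of_mem z₁ (Finset.mem_univ z₁) houter]
              have hinner : ∀ d ∈ (Finset.univ : Finset D), d ≠ d₁ →
                  (∑ yd : D → ↥𝒴,
                    (∏ d', if d' = d then P.mass (yd d', d', z₁) else ν d' z₁ (yd d'))
                      * (if Tmap (yd, Function.const Z d, z₁) = (y₁, d₁, z₁) then (1:ℝ) else 0)) = 0 := by
                intro d _ hd
                apply Finset.sum_eq_zero; intro yd _
                have hTm : Tmap (yd, Function.const Z d, z₁) = (yd d, d, z₁) := rfl
                simp [hTm, Prod.ext_iff, hd]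
              rw [Finset.sum_eq_single_of_mem d₁ (Finset.mem_univ d₁) hinner]
              have hT : ∀ yd : D → ↥𝒴,
                  (if Tmap (yd, Function.const Z d₁, z₁) = (y₁, d₁, z₁) then (1:ℝ) else 0)
                    = (if yd d₁ = y₁ then (1:ℝ) else 0) := by
                intro yd
                have hTm : Tmap (yd, Function.const Z d₁, z₁) = (yd d₁, d₁, z₁) := rfl
                rw [hTm]
                simp [Prod.ext_iff]
              calc (∑ yd : D → ↥𝒴,
                  (∏ d', if d' = d₁ then P.mass (yd d', d', z₁) else ν d' z₁ (yd d'))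
                    * (if Tmap (yd, Function.const Z d₁, z₁) = (y₁, d₁, z₁) then (1:ℝ) else 0))
                  = ∑ yd : D → ↥𝒴,
                    (∏ d', if d' = d₁ then P.mass (yd d', d', z₁) else ν d' z₁ (yd d'))
                      * (if yd d₁ = y₁ then (1:ℝ) else 0) :=
                    Finset.sum_congr rfl fun yd _ => by rw [hT yd]
                _ = ∏ d', ∑ u : ↥𝒴, (if d' = d₁ then P.mass (u, d', z₁) else ν d' z₁ u)
                      * (if d' = d₁ then (if u = y₁ then (1:ℝ) else 0) else 1) :=
                    innerSumEval P ν z₁ d₁ (fun u => if u = y₁ then (1:ℝ) else 0) d₁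
                _ = P.mass (y₁, d₁, z₁) := by
                    have h2 : ∀ d' : D,
                        (∑ u : ↥𝒴, (if d' = d₁ then P.mass (u, d', z₁) else ν d' z₁ u)
                          * (if d' = d₁ then (if u = y₁ then (1:ℝ) else 0) else 1))
                        = if d' = d₁ then P.mass (y₁, d₁, z₁) else 1 := by
                      intro d'
                      by_cases h : d' = d₁
                      · subst h
                        simp [mul_ite, Finset.sum_ite_eq']
                      · simp only [if_neg h, mul_one]
                        exact hν1 d' z₁
                    rw [Finset.prod_congr rfl fun d' _ => h2 d', prod_single_ite]
      exact hmain.symm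
    have hE : ∀ d z, (_root_.expect Q fun ω => if ω.2.2 = z then (ω.1 d : ℝ) else 0)
        = prZ P z * τ d := by
      intro d z
      set Bz := ∑ u : ↥𝒴, P.mass (u, d, z) * (u : ℝ) with hBzdef
      calc (_root_.expect Q fun ω => if ω.2.2 = z then (ω.1 d : ℝ) else 0)
          = ∑ ω : Latent 𝒴 D Z, Q.mass ω * (if ω.2.2 = z then (ω.1 d : ℝ) else 0) := rfl
        _ = ∑ ω : Latent 𝒴 D Z, mkMass P ν ω * (if ω.2.2 = z then (ω.1 d : ℝ) else 0) :=
            Finset.sum_congr rfl fun ω _ => by rw [hQmass]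
        _ = ∑ d₀, ∑ yd : D → ↥𝒴,
              (∏ d', if d' = d₀ then P.mass (yd d', d', z) else ν d' z (yd d'))
                * (yd d : ℝ) := by
            have h0 := mkMass_sum P ν (fun yd _ z0 => if z0 = z then (yd d : ℝ) else 0)
            rw [h0]
            have houter : ∀ z0 ∈ (Finset.univ : Finset Z), z0 ≠ z →
                (∑ d₀, ∑ yd : D → ↥𝒴,
                  (∏ d', if d' = d₀ then P.mass (yd d', d', z0) else ν d' z0 (yd d'))
                    * (if z0 = z then (yd d : ℝ) else 0)) = 0 := by
              intro z0 _ hz0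
              apply Finset.sum_eq_zero; intro d₀ _
              apply Finset.sum_eq_zero; intro yd _
              simp [hz0]
            rw [Finset.sum_eq_single_of_mem z (Finset.mem_univ z) houter]
            simp
        _ = ∑ d₀, (if d₀ = d then Bz else prDZ P d₀ z * m d z) := by
            refine Finset.sum_congr rfl fun d₀ _ => ?_
            calc (∑ yd : D → ↥𝒴,
                (∏ d', if d' = d₀ then P.mass (yd d', d', z) else ν d' z (yd d'))
                  * (yd d : ℝ))
                = ∏ d', ∑ u : ↥𝒴, (if d' = d₀ then P.mass (u, d', z) else ν d' z u)
                    * (if d' = d then (u : ℝ) else 1) :=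
                  innerSumEval P ν z d₀ (fun u => (u : ℝ)) d
              _ = if d₀ = d then Bz else prDZ P d₀ z * m d z := by
                  by_cases hd₀ : d₀ = d
                  · subst hd₀
                    rw [if_pos rfl]
                    have h2 : ∀ d' : D,
                        (∑ u : ↥𝒴, (if d' = d₀ then P.mass (u, d', z) else ν d' z u)
                          * (if d' = d₀ then (u : ℝ) else 1))
                        = if d' = d₀ then Bz else 1 := by
                      intro d'
                      by_cases h : d' = d₀
                      · subst h
                        simp only [if_pos rfl]
                        exact hBzdef.symm
                      · simp only [if_neg h, mul_one]
                        exact hν1 d' z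
                    rw [Finset.prod_congr rfl fun d' _ => h2 d', prod_single_ite]
                  · rw [if_neg hd₀]
                    have h2 : ∀ d' : D,
                        (∑ u : ↥𝒴, (if d' = d₀ then P.mass (u, d', z) else ν d' z u)
                          * (if d' = d then (u : ℝ) else 1))
                        = if d' = d₀ then prDZ P d₀ z else if d' = d then m d z else 1 := by
                      intro d'
                      by_cases h : d' = d₀
                      · subst h
                        simp only [if_pos rfl, if_neg hd₀, mul_one]
                        rfl
                      · by_cases h3 : d' = d
                        · subst h3
                          simp only [if_neg h, if_pos rfl]
                          exact hνm d' z
                        · simp only [if_neg h, if_neg h3, mul_one]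
                          exact hν1 d' z
                    rw [Finset.prod_congr rfl fun d' _ => h2 d', prod_pair_ite hd₀]
        _ = Bz + (prZ P z - prDZ P d z) * m d z := by
            have hsplit2 : ∀ d₀ : D, (if d₀ = d then Bz else prDZ P d₀ z * m d z)
                = (if d₀ = d then Bz - prDZ P d₀ z * m d z else 0) + prDZ P d₀ z * m d z := by
              intro d₀
              by_cases h : d₀ = d <;> simp [h]
            rw [Finset.sum_congr rfl fun d₀ _ => hsplit2 d₀, Finset.sum_add_distrib,
              Finset.sum_ite_eq' Finset.univ d (fun d₀ => Bz - prDZ P d₀ z * m d z)]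
            rw [← Finset.sum_mul, ← prZ_eq]
            simp only [Finset.mem_univ, if_true]
            ring
        _ = prZ P z * τ d := by
            have hBz2 : Bz = betaObs P d z * prZ P z :=
              (betaObs_mul P d z (ne_of_gt (hP z))).symm
            rw [hBz2]
            exact (hm d z).2.2
    have hQz2 : ∀ z, pr Q {ω : Latent 𝒴 D Z | ω.2.2 = z} = prZ P z := fun z =>
      (pr_rat hR {o : Obs 𝒴 D Z | o.2.2 = z}).symm
    have htheta : theta Q = τ := by
      funext d
      calc theta Q d
          = ∑ z, _root_.expect Q fun ω => if ω.2.2 = z then (ω.1 d : ℝ) else 0 :=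
            expect_zdec Q _
        _ = ∑ z, prZ P z * τ d := Finset.sum_congr rfl fun z _ => hE d z
        _ = τ d := by rw [← Finset.sum_mul, sum_prZ, one_mul]
    refine ⟨Q, ⟨?_, hR⟩, htheta⟩
    intro d z _
    rw [hE d z, hQz2 z, htheta]
    rw [mul_comm, mul_div_assoc, div_self (ne_of_gt (hP z)), mul_one]
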